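/- arXiv:2011.08220 — 3 statements merged into one kernel-verified Lean document; each statement's English description precedes it below -/
import Mathlib

section
/- Let n ≥ 0 and r ≥ 2 be integers. Then |F_{1,r}(n)| = |O_{1,r}(n)|, i.e., the number of partitions of n in which exactly one difference of consecutive parts (including the last part, taking the part after the last to be 0) is at least r and all other such differences are at most r−1 equals the number of partitions of n with exactly one part size divisible by r. -/
/-!
Conjugation turns the differences `λ_i - λ_{i+1}` of `λ` into the multiplicities of its
conjugate, so `F_{1,r}(n)` is in bijection with `D_{1,r}(n)`, the partitions in which exactly one
part size occurs at least `r` times. A partition in `D_{1,r}(n)` is, in exactly one way, a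
partition of `n - jrs` with all multiplicities below `r` plus `jr` extra copies of some `s`
(`j ≥ 1`); a partition in `O_{1,r}(n)` is, in exactly one way, a partition of `n - jrs` with no
part divisible by `r` plus `j` copies of `rs`. Summing over `(s, j)`, Glaisher's theorem
`|O_r(m)| = |D_r(m)|` matches the two counts term by term.
-/

open scoped Classical

namespace BeckPaper

/-- The parts of a partition, sorted in non-increasing order. -/
def partsList {n : ℕ} (p : n.Partition) : List ℕ := p.parts.sort (· ≥ ·)

/-- The `i`-th part of a partition (`1`-indexed); `0` if `i` exceeds the number of parts. -/
def part {n : ℕ} (p : n.Partition) (i : ℕ) : ℕ := (partsList p).getD (i - 1) 0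

/-- `ℓ(λ)`: the number of parts of `λ`. -/
def numParts {n : ℕ} (p : n.Partition) : ℕ := Multiset.card p.parts

/-- `ℓ_t(λ)`: the number of parts of `λ` congruent to `t` modulo `r`. -/
def lMod (r t : ℕ) {n : ℕ} (p : n.Partition) : ℕ :=
  Multiset.card (p.parts.filter (fun x => x % r = t % r))

/-- `ℓ̄_t(λ)`: the number of different part sizes appearing at least `t` times in `λ`. -/
def lRep (t : ℕ) {n : ℕ} (p : n.Partition) : ℕ :=
  (p.parts.toFinset.filter (fun s => t ≤ p.parts.count s)).card

/-- `ℓ̄(λ)`: the number of different part sizes of `λ`. -/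
def lDist {n : ℕ} (p : n.Partition) : ℕ := p.parts.toFinset.card

/-- `d_t(λ)`: the number of indices `1 ≤ i ≤ ℓ(λ)` with `λ_i − λ_{i+1} ≥ t`. -/
def dCount (t : ℕ) {n : ℕ} (p : n.Partition) : ℕ :=
  ((Finset.Icc 1 (numParts p)).filter (fun i => t ≤ part p i - part p (i + 1))).card

/-- `λ ∈ O_r(n)`: no part is divisible by `r`. -/
def IsRegular (r : ℕ) {n : ℕ} (p : n.Partition) : Prop := ∀ x ∈ p.parts, ¬ r ∣ x

/-- `λ ∈ D_r(n)`: no part appears more than `r − 1` times. -/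
def IsRestricted (r : ℕ) {n : ℕ} (p : n.Partition) : Prop :=
  ∀ s : ℕ, p.parts.count s ≤ r - 1

/-- `λ ∈ F_r(n)`: all differences of consecutive parts (with `λ_{k+1} = 0`) are `≤ r − 1`. -/
def IsFlat (r : ℕ) {n : ℕ} (p : n.Partition) : Prop :=
  ∀ i, 1 ≤ i → i ≤ numParts p → part p i - part p (i + 1) ≤ r - 1

/-- `λ ∈ O_{1,r}(n)`: the set of part sizes divisible by `r` has exactly one element. -/
def IsOneRegular (r : ℕ) {n : ℕ} (p : n.Partition) : Prop :=
  (p.parts.toFinset.filter (fun s => r ∣ s)).card = 1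

/-- `λ ∈ D_{1,r}(n)`: exactly one part size appears at least `r` times. -/
def IsOneRestricted (r : ℕ) {n : ℕ} (p : n.Partition) : Prop :=
  (p.parts.toFinset.filter (fun s => r ≤ p.parts.count s)).card = 1

/-- `λ ∈ F_{1,r}(n)`: exactly one difference of consecutive parts is `≥ r`, and all
other such differences are `≤ r − 1`. -/
def IsOneFlat (r : ℕ) {n : ℕ} (p : n.Partition) : Prop :=
  ∃ i, (1 ≤ i ∧ i ≤ numParts p ∧ r ≤ part p i - part p (i + 1)) ∧
    ∀ j, 1 ≤ j → j ≤ numParts p → j ≠ i → part p j - part p (j + 1) ≤ r - 1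

/-- `λ ∈ T_r(n)`: exactly one part size has multiplicity at least `r`, and that
multiplicity is strictly less than `2r`. -/
def IsInT (r : ℕ) {n : ℕ} (p : n.Partition) : Prop :=
  ∃ s : ℕ, (r ≤ p.parts.count s ∧ p.parts.count s < 2 * r) ∧
    ∀ s' : ℕ, r ≤ p.parts.count s' → s' = s

end BeckPaper

open Finset

theorem List.le_getD_iff_lt_countP {L : List ℕ} (hL : L.Pairwise (· ≥ ·)) {i : ℕ} (hi : 0 < i)
    (v : ℕ) : i ≤ L.getD v 0 ↔ v < L.countP (i ≤ ·) := by
  induction L generalizing v with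
  | nil => simp only [List.getD_nil, List.countP_nil]; omega
  | cons a L ih =>
    obtain ⟨ha, hL⟩ := List.pairwise_cons.1 hL
    by_cases hia : i ≤ a
    · rcases v with _ | v
      · simp [hia]
      · rw [List.getD_cons_succ, ih hL, List.countP_cons_of_pos (by simpa using hia)]
        omega
    · have hlt : ∀ x ∈ a :: L, x < i := fun x hx => by grind
      have hL0 : L.countP (i ≤ ·) = 0 :=
        List.countP_eq_zero.2 fun x hx => by simpa using hlt x (List.mem_cons_of_mem a hx)
      rw [List.countP_cons_of_neg (by simpa using hia), hL0]
      rcases v with _ | v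
      · simpa using hia
      · rw [List.getD_cons_succ, ih hL, hL0]
        omega

namespace Multiset

theorem countP_le_eq_countP_succ_le_add_count (μ : Multiset ℕ) (v : ℕ) :
    μ.countP (v ≤ ·) = μ.countP (v + 1 ≤ ·) + μ.count v := by
  induction μ using Multiset.induction_on with
  | empty => simp
  | cons a μ ih =>
    simp only [count_cons, countP_cons]
    split_ifs <;> omega

theorem sum_Icc_countP_le {μ : Multiset ℕ} {N : ℕ} (hμ : ∀ x ∈ μ, x ≤ N) :
    ∑ i ∈ Finset.Icc 1 N, μ.countP (i ≤ ·) = μ.sum := by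
  induction μ using Multiset.induction_on with
  | empty => simp
  | cons a μ ih =>
    have haN := hμ a (mem_cons_self a μ)
    have hIcc : (Finset.Icc 1 N).filter (· ≤ a) = Finset.Icc 1 a := by
      ext i; simp only [Finset.mem_filter, Finset.mem_Icc]; omega
    simp only [countP_cons, Finset.sum_add_distrib, Finset.sum_boole, hIcc,
      Nat.card_Icc, Nat.add_sub_cancel, Nat.cast_id, sum_cons,
      ih fun x hx => hμ x (mem_cons_of_mem hx), add_comm]

section

variable {α : Type*} [DecidableEq α]

theorem filter_add_replicate_eq_singleton {P : α → Prop} [DecidablePred P]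
    {ν : Multiset α} {j : ℕ} {m : α} (hj : 0 < j) (hm : P m) (hν : ∀ i ∈ ν, ¬ P i) :
    (ν + replicate j m).toFinset.filter P = {m} ∧ (ν + replicate j m).count m = j := by
  refine ⟨Finset.ext fun i => ?_, ?_⟩
  · simp only [Finset.mem_filter, mem_toFinset, mem_add,
      mem_replicate, Finset.mem_singleton]
    constructor
    · rintro ⟨hi | ⟨-, rfl⟩, hPi⟩
      · exact absurd hPi (hν i hi)
      · rfl
    · rintro rfl
      exact ⟨Or.inr ⟨hj.ne', rfl⟩, hm⟩
  · rw [count_add, count_replicate_self,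
      count_eq_zero.2 fun h => hν m h hm, zero_add]

theorem exists_eq_add_replicate_of_filter_eq_singleton {P : α → Prop}
    [DecidablePred P] {μ : Multiset α} {m : α} (h : μ.toFinset.filter P = {m}) :
    ∃ ν j, 0 < j ∧ μ = ν + replicate j m ∧ P m ∧ ∀ i ∈ ν, ¬ P i := by
  have hm := Finset.mem_filter.1 (h ▸ Finset.mem_singleton_self m)
  refine ⟨μ.filter (· ≠ m), μ.count m, count_pos.2 (mem_toFinset.1 hm.1),
    ?_, hm.2, fun i hi hPi => ?_⟩
  · rw [← filter_eq', add_comm]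
    exact (filter_add_not _ μ).symm
  · obtain ⟨hiμ, him⟩ := mem_filter.1 hi
    exact him (Finset.mem_singleton.1 (h ▸ Finset.mem_filter.2 ⟨mem_toFinset.2 hiμ, hPi⟩))

theorem filter_le_count_add_replicate {ν : Multiset α} {r j : ℕ} {s : α} (hr : 0 < r)
    (hj : 0 < j) (hν : ∀ i ∈ ν, ν.count i < r) :
    (ν + replicate (j * r) s).toFinset.filter (fun i => r ≤ (ν + replicate (j * r) s).count i)
        = {s} ∧ (ν + replicate (j * r) s).count s / r = j := by
  have hν' : ∀ i, ν.count i < r := fun i => by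
    by_cases hi : i ∈ ν
    · exact hν i hi
    · rwa [count_eq_zero.2 hi]
  have hcount : ∀ i, (ν + replicate (j * r) s).count i = ν.count i + if s = i then j * r else 0 :=
    fun i => by rw [count_add, count_replicate]
  have hjr : r ≤ j * r := Nat.le_mul_of_pos_left r hj
  refine ⟨Finset.ext fun i => ?_, ?_⟩
  · simp only [Finset.mem_filter, mem_toFinset, Finset.mem_singleton, hcount]
    constructor
    · rintro ⟨-, hi⟩
      by_contra hne
      rw [if_neg (Ne.symm hne)] at hi
      exact (hν' i).not_ge (by omega)
    · rintro rfl
      rw [if_pos rfl]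
      exact ⟨mem_add.2 (Or.inr (mem_replicate.2 ⟨by omega, rfl⟩)), by omega⟩
  · rw [hcount, if_pos rfl, Nat.add_mul_div_right _ _ hr, Nat.div_eq_of_lt (hν' s), zero_add]

theorem exists_eq_add_replicate_of_filter_le_count_eq_singleton {μ : Multiset α}
    {r : ℕ} {s : α} (hr : 0 < r) (h : μ.toFinset.filter (fun i => r ≤ μ.count i) = {s}) :
    ∃ ν j, 0 < j ∧ μ = ν + replicate (j * r) s ∧ ∀ i ∈ ν, ν.count i < r := by
  have hs := Finset.mem_filter.1 (h ▸ Finset.mem_singleton_self s)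
  have hle : replicate (μ.count s / r * r) s ≤ μ :=
    le_count_iff_replicate_le.1 (Nat.div_mul_le_self _ _)
  refine ⟨μ - replicate (μ.count s / r * r) s, μ.count s / r, Nat.div_pos hs.2 hr,
    (tsub_add_cancel_of_le hle).symm, fun i hi => ?_⟩
  rw [count_sub, count_replicate]
  split_ifs with his
  · rw [← his, ← Nat.mod_eq_sub_div_mul]
    exact Nat.mod_lt _ hr
  · rw [Nat.sub_zero]
    refine lt_of_not_ge fun hri => his ?_
    exact (Finset.mem_singleton.1 (h ▸ Finset.mem_filter.2
      ⟨mem_toFinset.2 (mem_of_le tsub_le_self hi), hri⟩)).symm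

end

end Multiset

theorem Finset.card_filter_eq_sum_card_filter_of_unique {α ι : Type*} [Fintype α]
    {P : α → Prop} [DecidablePred P] {R : α → ι → Prop} [∀ a x, Decidable (R a x)]
    {S : Finset ι} (hP : ∀ a, P a ↔ ∃ x ∈ S, R a x)
    (hR : ∀ a, ∀ x ∈ S, ∀ y ∈ S, R a x → R a y → x = y) :
    #{a | P a} = ∑ x ∈ S, #{a | R a x} := by
  have hfiber : ∀ a, #(S.bipartiteAbove R a) = if P a then 1 else 0 := fun a => by
    split_ifs with ha
    · obtain ⟨x, hx, hax⟩ := (hP a).1 ha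
      exact card_eq_one.2 ⟨x, eq_singleton_iff_unique_mem.2
        ⟨mem_filter.2 ⟨hx, hax⟩, fun y hy => (mem_filter.1 hy).elim
          fun hyS hay => hR a y hyS x hx hay hax⟩⟩
    · exact card_eq_zero.2 (filter_eq_empty_iff.2 fun x hx hax =>
        ha ((hP a).2 ⟨x, hx, hax⟩))
  calc #{a | P a} = ∑ a, #(S.bipartiteAbove R a) := by simp only [hfiber, sum_boole]; rfl
    _ = ∑ x ∈ S, #{a | R a x} := sum_card_bipartiteAbove_eq_sum_card_bipartiteBelow R

namespace Nat.Partition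

variable {n : ℕ}

def SplitsOff (C : Multiset ℕ → Prop) (k m : ℕ) (p : n.Partition) : Prop :=
  Multiset.replicate k m ≤ p.parts ∧ C (p.parts - Multiset.replicate k m)

theorem splitsOff_iff {C : Multiset ℕ → Prop} {k m : ℕ} {p : n.Partition} :
    SplitsOff C k m p ↔ ∃ ν, C ν ∧ p.parts = ν + Multiset.replicate k m := by
  constructor
  · rintro ⟨hle, hC⟩
    exact ⟨_, hC, (tsub_add_cancel_of_le hle).symm⟩
  · rintro ⟨ν, hC, hp⟩
    rw [SplitsOff, hp, add_tsub_cancel_right]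
    exact ⟨Multiset.le_add_left _ _, hC⟩

theorem mul_le_of_parts_eq_add_replicate {p : n.Partition} {ν : Multiset ℕ} {k m : ℕ}
    (h : p.parts = ν + Multiset.replicate k m) : k * m ≤ n := by
  have := congrArg Multiset.sum h
  rw [p.parts_sum, Multiset.sum_add, Multiset.sum_replicate, smul_eq_mul] at this
  omega

def removeReplicateEquiv {k m : ℕ} (hm : 0 < m) (hkm : k * m ≤ n) :
    {p : n.Partition // Multiset.replicate k m ≤ p.parts} ≃ (n - k * m).Partition where
  toFun p :=
    { parts := p.1.parts - Multiset.replicate k m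
      parts_pos := fun hi => p.1.parts_pos (Multiset.mem_of_le tsub_le_self hi)
      parts_sum := by
        have := congrArg Multiset.sum (tsub_add_cancel_of_le p.2)
        rw [Multiset.sum_add, Multiset.sum_replicate, smul_eq_mul, p.1.parts_sum] at this
        omega }
  invFun q :=
    ⟨{ parts := q.parts + Multiset.replicate k m
       parts_pos := fun hi => (Multiset.mem_add.1 hi).elim q.parts_pos
         fun hi => Multiset.eq_of_mem_replicate hi ▸ hm
       parts_sum := by
         rw [Multiset.sum_add, q.parts_sum, Multiset.sum_replicate, smul_eq_mul]
         omega }, Multiset.le_add_left _ _⟩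
  left_inv p := Subtype.ext (Nat.Partition.ext (tsub_add_cancel_of_le p.2))
  right_inv q := Nat.Partition.ext (add_tsub_cancel_right _ _)

theorem card_splitsOff {k m : ℕ} (hm : 0 < m) (hkm : k * m ≤ n) (C : Multiset ℕ → Prop)
    [DecidablePred C] :
    #{p : n.Partition | SplitsOff C k m p} = #{q : (n - k * m).Partition | C q.parts} := by
  let e := removeReplicateEquiv hm hkm
  refine card_bij' (fun p hp => e ⟨p, (mem_filter.1 hp).2.1⟩)
    (fun q _ => (e.symm q).1) (fun p hp => ?_) (fun q hq => ?_)
    (fun p _ => congrArg Subtype.val (e.symm_apply_apply _))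
    (fun q _ => e.apply_symm_apply q)
  · exact mem_filter.2 ⟨mem_univ _, (mem_filter.1 hp).2.2⟩
  · refine mem_filter.2 ⟨mem_univ _, (e.symm q).2, ?_⟩
    show C (q.parts + Multiset.replicate k m - Multiset.replicate k m)
    rw [add_tsub_cancel_right]
    exact (mem_filter.1 hq).2

theorem card_eq_sum_card_of_splitsOff {ι : Type*} {P : n.Partition → Prop} [DecidablePred P]
    {C : Multiset ℕ → Prop} [DecidablePred C] {S : Finset ι} {k m : ι → ℕ}
    (hm : ∀ x ∈ S, 0 < m x) (hkm : ∀ x ∈ S, k x * m x ≤ n)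
    (hP : ∀ p, P p ↔ ∃ x ∈ S, p.SplitsOff C (k x) (m x))
    (huniq : ∀ p : n.Partition, ∀ x ∈ S, ∀ y ∈ S,
      p.SplitsOff C (k x) (m x) → p.SplitsOff C (k y) (m y) → x = y) :
    #{p | P p} = ∑ x ∈ S, #{q : (n - k x * m x).Partition | C q.parts} :=
  (card_filter_eq_sum_card_filter_of_unique hP huniq).trans
    (sum_congr rfl fun x hx => card_splitsOff (hm x hx) (hkm x hx) C)

end Nat.Partition

namespace BeckPaper

open Nat.Partition

section

variable {n r : ℕ}

/-- `λ'_i`, the `i`-th part of the conjugate of `λ`. -/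
def numPartsGe (p : n.Partition) (i : ℕ) : ℕ := p.parts.countP (i ≤ ·)

theorem le_part_iff {p : n.Partition} {i v : ℕ} (hi : 0 < i) (hv : 0 < v) :
    i ≤ part p v ↔ v ≤ numPartsGe p i := by
  rw [part, partsList, List.le_getD_iff_lt_countP (Multiset.pairwise_sort _ _) hi,
    ← Multiset.coe_countP, Multiset.sort_eq]
  change v - 1 < numPartsGe p i ↔ _
  omega

theorem part_le (p : n.Partition) (v : ℕ) : part p v ≤ n := by
  by_cases hv : v - 1 < (partsList p).length
  · rw [part, List.getD_eq_getElem _ _ hv]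
    exact le_of_mem_parts
      (Multiset.sort_eq p.parts (· ≥ ·) ▸ Multiset.mem_coe.2 (List.getElem_mem hv))
  · rw [part, List.getD_eq_default _ _ (not_lt.1 hv)]
    exact Nat.zero_le n

theorem part_eq_zero_of_numParts_lt {p : n.Partition} {v : ℕ} (hv : numParts p < v) :
    part p v = 0 := by
  rw [part, List.getD_eq_default]
  rw [partsList, Multiset.length_sort]
  exact Nat.le_sub_one_of_lt hv

theorem count_eq_numPartsGe_sub (p : n.Partition) (v : ℕ) :
    p.parts.count v = numPartsGe p v - numPartsGe p (v + 1) := by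
  rw [numPartsGe, numPartsGe, Multiset.countP_le_eq_countP_succ_le_add_count]
  omega

theorem sum_numPartsGe (p : n.Partition) : ∑ i ∈ Icc 1 n, numPartsGe p i = n :=
  (Multiset.sum_Icc_countP_le fun _ => le_of_mem_parts).trans p.parts_sum

def conj (p : n.Partition) : n.Partition :=
  ofSums n ((Icc 1 n).val.map (numPartsGe p)) (sum_numPartsGe p)

theorem filter_le_numPartsGe (p : n.Partition) {v : ℕ} (hv : 0 < v) :
    (Icc 1 n).filter (fun i => v ≤ numPartsGe p i) = Icc 1 (part p v) := by
  ext i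
  simp only [mem_filter, mem_Icc]
  constructor
  · rintro ⟨⟨hi, -⟩, hvi⟩
    exact ⟨hi, (le_part_iff hi hv).2 hvi⟩
  · rintro ⟨hi, hiv⟩
    exact ⟨⟨hi, hiv.trans (part_le p v)⟩, (le_part_iff hi hv).1 hiv⟩

theorem numPartsGe_conj (p : n.Partition) {v : ℕ} (hv : 0 < v) :
    numPartsGe (conj p) v = part p v := by
  dsimp only [numPartsGe, conj, ofSums]
  rw [Multiset.countP_filter, Multiset.countP_map,
    Multiset.filter_congr fun i _ => and_iff_left_of_imp fun h => (hv.trans_le h).ne',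
    ← filter_val, ← card_def, filter_le_numPartsGe p hv, Nat.card_Icc,
    Nat.add_sub_cancel]

theorem count_conj (p : n.Partition) {v : ℕ} (hv : 0 < v) :
    (conj p).parts.count v = part p v - part p (v + 1) := by
  rw [count_eq_numPartsGe_sub, numPartsGe_conj p hv, numPartsGe_conj p (Nat.succ_pos v)]

theorem part_conj (p : n.Partition) {i : ℕ} (hi : 0 < i) : part (conj p) i = numPartsGe p i := by
  refine eq_of_forall_le_iff fun j => ?_
  rcases Nat.eq_zero_or_pos j with rfl | hj
  · exact iff_of_true (Nat.zero_le _) (Nat.zero_le _)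
  · rw [le_part_iff hj hi, numPartsGe_conj p hj, le_part_iff hi hj]

theorem conj_conj (p : n.Partition) : conj (conj p) = p := by
  refine Nat.Partition.ext (Multiset.ext.2 fun v => ?_)
  rcases Nat.eq_zero_or_pos v with rfl | hv
  · rw [Multiset.count_eq_zero.2 fun h => (conj (conj p)).parts_pos h |>.ne rfl,
      Multiset.count_eq_zero.2 fun h => p.parts_pos h |>.ne rfl]
  · rw [count_conj _ hv, part_conj p hv, part_conj p (Nat.succ_pos v), count_eq_numPartsGe_sub]

theorem isOneFlat_iff_dCount_eq_one (hr : 0 < r) (p : n.Partition) :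
    IsOneFlat r p ↔ dCount r p = 1 := by
  simp only [IsOneFlat, dCount, card_eq_one, eq_singleton_iff_unique_mem,
    mem_filter, mem_Icc]
  refine exists_congr fun i => and_congr (by tauto) (forall_congr' fun j => ?_)
  exact ⟨fun h ⟨⟨h1, h2⟩, h3⟩ => by_contra fun hne => by have := h h1 h2 hne; omega,
    fun h h1 h2 hne => by by_contra hc; exact hne (h ⟨⟨h1, h2⟩, by omega⟩)⟩

theorem filter_le_count_conj (hr : 0 < r) (p : n.Partition) :
    (conj p).parts.toFinset.filter (fun s => r ≤ (conj p).parts.count s) =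
      (Icc 1 (numParts p)).filter (fun i => r ≤ part p i - part p (i + 1)) := by
  ext v
  simp only [mem_filter, Multiset.mem_toFinset, mem_Icc]
  constructor
  · rintro ⟨hv, hrv⟩
    have hv0 := (conj p).parts_pos hv
    rw [count_conj p hv0] at hrv
    refine ⟨⟨hv0, not_lt.1 fun hlt => ?_⟩, hrv⟩
    rw [part_eq_zero_of_numParts_lt hlt] at hrv
    omega
  · rintro ⟨⟨hv0, -⟩, hrv⟩
    rw [← count_conj p hv0] at hrv
    exact ⟨Multiset.count_pos.1 (hr.trans_le hrv), hrv⟩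

theorem isOneRestricted_conj_iff (hr : 0 < r) (p : n.Partition) :
    IsOneRestricted r (conj p) ↔ IsOneFlat r p := by
  rw [IsOneRestricted, filter_le_count_conj hr, ← dCount, isOneFlat_iff_dCount_eq_one hr]

theorem card_oneFlat_eq_card_oneRestricted (hr : 0 < r) :
    #{p : n.Partition | IsOneFlat r p} = #{q : n.Partition | IsOneRestricted r q} := by
  refine card_nbij' conj conj (fun p hp => ?_) (fun q hq => ?_)
    (fun p _ => conj_conj p) (fun q _ => conj_conj q)
  · simpa [isOneRestricted_conj_iff hr] using hp
  · simpa [← isOneRestricted_conj_iff hr, conj_conj] using hq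

-- `(s, j)` indexes the block split off: `jr` copies of `s` for `D_{1,r}`, `j` copies of `rs` for
-- `O_{1,r}`.
def blockKeys (r n : ℕ) : Finset (ℕ × ℕ) := {x ∈ Icc 1 n ×ˢ Icc 1 n | x.2 * r * x.1 ≤ n}

theorem mem_blockKeys (hr : 0 < r) {x : ℕ × ℕ} :
    x ∈ blockKeys r n ↔ 0 < x.1 ∧ 0 < x.2 ∧ x.2 * r * x.1 ≤ n := by
  simp only [blockKeys, mem_filter, mem_product, mem_Icc]
  constructor
  · rintro ⟨⟨⟨h1, -⟩, h2, -⟩, h⟩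
    exact ⟨h1, h2, h⟩
  · rintro ⟨h1, h2, h⟩
    refine ⟨⟨⟨h1, (Nat.le_mul_of_pos_left _ (Nat.mul_pos h2 hr)).trans h⟩, h2, ?_⟩, h⟩
    exact ((Nat.le_mul_of_pos_right _ hr).trans (Nat.le_mul_of_pos_right _ h1)).trans h

theorem isOneRestricted_iff_exists_splitsOff (hr : 0 < r) (q : n.Partition) :
    IsOneRestricted r q ↔ ∃ x ∈ blockKeys r n,
      q.SplitsOff (fun ν => ∀ i ∈ ν, ν.count i < r) (x.2 * r) x.1 := by
  simp only [splitsOff_iff, mem_blockKeys hr]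
  constructor
  · intro h
    obtain ⟨s, hs⟩ := card_eq_one.1 h
    obtain ⟨ν, j, hj, hq, hν⟩ :=
      Multiset.exists_eq_add_replicate_of_filter_le_count_eq_singleton hr hs
    have hs0 : 0 < s := q.parts_pos (hq ▸ Multiset.mem_add.2
      (Or.inr (Multiset.mem_replicate.2 ⟨by positivity, rfl⟩)))
    exact ⟨(s, j), ⟨hs0, hj, mul_le_of_parts_eq_add_replicate hq⟩, ν, hν, hq⟩
  · rintro ⟨x, ⟨-, hj, -⟩, ν, hν, hq⟩
    rw [IsOneRestricted, hq, (Multiset.filter_le_count_add_replicate hr hj hν).1,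
      card_singleton]

theorem eq_of_splitsOff_countRestricted (hr : 0 < r) {q : n.Partition} {x y : ℕ × ℕ}
    (hx : 0 < x.2) (hy : 0 < y.2)
    (hqx : q.SplitsOff (fun ν => ∀ i ∈ ν, ν.count i < r) (x.2 * r) x.1)
    (hqy : q.SplitsOff (fun ν => ∀ i ∈ ν, ν.count i < r) (y.2 * r) y.1) : x = y := by
  obtain ⟨ν, hν, hq⟩ := splitsOff_iff.1 hqx
  obtain ⟨ν', hν', hq'⟩ := splitsOff_iff.1 hqy
  obtain ⟨hfx, hcx⟩ := Multiset.filter_le_count_add_replicate hr hx hν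
  obtain ⟨hfy, hcy⟩ := Multiset.filter_le_count_add_replicate hr hy hν'
  rw [← hq] at hfx hcx
  rw [← hq'] at hfy hcy
  have hs : x.1 = y.1 := singleton_injective (hfx.symm.trans hfy)
  exact Prod.ext hs (hcx.symm.trans (hs ▸ hcy))

theorem card_oneRestricted_eq_sum (hr : 0 < r) :
    #{q : n.Partition | IsOneRestricted r q} =
      ∑ x ∈ blockKeys r n, #(countRestricted (n - x.2 * r * x.1) r) := by
  refine (card_eq_sum_card_of_splitsOff (P := (IsOneRestricted r ·)) (S := blockKeys r n)
    (k := fun x => x.2 * r) (m := fun x => x.1) (fun _ hx => ((mem_blockKeys hr).1 hx).1)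
    (fun _ hx => ((mem_blockKeys hr).1 hx).2.2) (isOneRestricted_iff_exists_splitsOff hr)
    fun _ _ hx _ hy => eq_of_splitsOff_countRestricted hr ((mem_blockKeys hr).1 hx).2.1
      ((mem_blockKeys hr).1 hy).2.1).trans (sum_congr rfl fun _ _ => rfl)

theorem isOneRegular_iff_exists_splitsOff (hr : 0 < r) (p : n.Partition) :
    IsOneRegular r p ↔ ∃ x ∈ blockKeys r n,
      p.SplitsOff (fun ν => ∀ i ∈ ν, ¬ r ∣ i) x.2 (r * x.1) := by
  simp only [splitsOff_iff, mem_blockKeys hr]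
  constructor
  · intro h
    obtain ⟨m, hm⟩ := card_eq_one.1 h
    obtain ⟨ν, j, hj, hp, ⟨s, rfl⟩, hν⟩ :=
      Multiset.exists_eq_add_replicate_of_filter_eq_singleton hm
    have hs0 : 0 < r * s := p.parts_pos (hp ▸ Multiset.mem_add.2
      (Or.inr (Multiset.mem_replicate.2 ⟨hj.ne', rfl⟩)))
    refine ⟨(s, j), ⟨Nat.pos_of_mul_pos_left hs0, hj, ?_⟩, ν, hν, hp⟩
    rw [mul_assoc]
    exact mul_le_of_parts_eq_add_replicate hp
  · rintro ⟨x, ⟨-, hj, -⟩, ν, hν, hp⟩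
    rw [IsOneRegular, hp, (Multiset.filter_add_replicate_eq_singleton hj
      (dvd_mul_right r x.1) hν).1, card_singleton]

theorem eq_of_splitsOff_restricted (hr : 0 < r) {p : n.Partition} {x y : ℕ × ℕ}
    (hx : 0 < x.2) (hy : 0 < y.2)
    (hpx : p.SplitsOff (fun ν => ∀ i ∈ ν, ¬ r ∣ i) x.2 (r * x.1))
    (hpy : p.SplitsOff (fun ν => ∀ i ∈ ν, ¬ r ∣ i) y.2 (r * y.1)) : x = y := by
  obtain ⟨ν, hν, hp⟩ := splitsOff_iff.1 hpx
  obtain ⟨ν', hν', hp'⟩ := splitsOff_iff.1 hpy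
  obtain ⟨hfx, hcx⟩ := Multiset.filter_add_replicate_eq_singleton hx (dvd_mul_right r x.1) hν
  obtain ⟨hfy, hcy⟩ := Multiset.filter_add_replicate_eq_singleton hy (dvd_mul_right r y.1) hν'
  rw [← hp] at hfx hcx
  rw [← hp'] at hfy hcy
  have hm : r * x.1 = r * y.1 := singleton_injective (hfx.symm.trans hfy)
  exact Prod.ext (Nat.eq_of_mul_eq_mul_left hr hm) (hcx.symm.trans (hm ▸ hcy))

theorem card_oneRegular_eq_sum (hr : 0 < r) :
    #{p : n.Partition | IsOneRegular r p} =
      ∑ x ∈ blockKeys r n, #(restricted (n - x.2 * r * x.1) (¬ r ∣ ·)) := by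
  refine (card_eq_sum_card_of_splitsOff (P := (IsOneRegular r ·)) (S := blockKeys r n)
    (k := fun x => x.2) (m := fun x => r * x.1)
    (fun _ hx => Nat.mul_pos hr ((mem_blockKeys hr).1 hx).1)
    (fun _ hx => mul_assoc _ r _ ▸ ((mem_blockKeys hr).1 hx).2.2)
    (isOneRegular_iff_exists_splitsOff hr)
    fun _ _ hx _ hy => eq_of_splitsOff_restricted hr ((mem_blockKeys hr).1 hx).2.1
      ((mem_blockKeys hr).1 hy).2.1).trans (sum_congr rfl fun x _ => ?_)
  rw [← mul_assoc]
  rfl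

end

theorem oneFlat_eq_oneRegular (n r : ℕ) (hr : 2 ≤ r) :
    (Finset.univ.filter (fun p : n.Partition => IsOneFlat r p)).card = (Finset.univ.filter (fun p : n.Partition => IsOneRegular r p)).card := by
  have hr0 : 0 < r := by omega
  rw [card_oneFlat_eq_card_oneRestricted hr0, card_oneRestricted_eq_sum hr0,
    card_oneRegular_eq_sum hr0]
  exact sum_congr rfl fun x _ => (card_restricted_eq_card_countRestricted _ hr0).symm

end BeckPaper
end

section
/- Let n ≥ 0 and r ≥ 2 be integers. Then |D_{1,r}(n)| = |O_{1,r}(n)|, i.e., the number of partitions of n in which exactly one part size appears at least r times equals the number of partitions of n with exactly one part size divisible by r. -/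
open scoped Classical

namespace BeckPaper

/-!
A partition in `D_{1,r}(n)` whose repeated part `u` occurs `c ≥ r` times is an `r`-restricted
partition of `n - r u q` plus `q r` copies of `u`, where `q = c / r`. A partition in `O_{1,r}(n)`
whose part divisible by `r` is `r t`, occurring `m` times, is an `r`-regular partition of
`n - r t m` plus `m` copies of `r t`. Both decompositions are unique and indexed by the pairs
`(a, b)` of positive integers with `r a b ≤ n`, so Glaisher's theorem `|D_r(k)| = |O_r(k)|`,
applied to `k = n - r a b`, matches the two sides term by term.
-/

open Finset

theorem card_filter_eq_sum_card_filter {α ι : Type*} [Fintype α] (I : Finset ι)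
    (P : α → Prop) (R : ι → α → Prop) (hP : ∀ a, P a ↔ ∃ i ∈ I, R i a)
    (hR : ∀ a, ∀ i ∈ I, ∀ j ∈ I, R i a → R j a → i = j) :
    #{a | P a} = ∑ i ∈ I, #{a | R i a} := by
  rw [← card_biUnion]
  · congr 1
    ext a
    simp [hP]
  · intro i hi j hj hij
    simp only [Function.onFun, disjoint_left, mem_filter, mem_univ, true_and]
    exact fun a hai haj => hij (hR a i hi j hj hai haj)

section

variable {n : ℕ}

theorem sum_le_of_le_parts {B : Multiset ℕ} {p : n.Partition} (h : B ≤ p.parts) :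
    B.sum ≤ n := by
  have := congrArg Multiset.sum (tsub_add_cancel_of_le h)
  rw [Multiset.sum_add, p.parts_sum] at this
  omega

def partitionWithPartsEquiv (B : Multiset ℕ) (hB : ∀ b ∈ B, 0 < b) (hBn : B.sum ≤ n) :
    {p : n.Partition // B ≤ p.parts} ≃ (n - B.sum).Partition where
  toFun p :=
    { parts := p.1.parts - B
      parts_pos := fun hi => p.1.parts_pos (Multiset.mem_of_le tsub_le_self hi)
      parts_sum := by
        have := congrArg Multiset.sum (tsub_add_cancel_of_le p.2)
        rw [Multiset.sum_add, p.1.parts_sum] at this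
        omega }
  invFun μ :=
    ⟨{ parts := μ.parts + B
       parts_pos := fun hi => (Multiset.mem_add.1 hi).elim μ.parts_pos (hB _)
       parts_sum := by rw [Multiset.sum_add, μ.parts_sum]; omega },
     Multiset.le_add_left _ _⟩
  left_inv p := Subtype.ext (Nat.Partition.ext (tsub_add_cancel_of_le p.2))
  right_inv μ := Nat.Partition.ext (add_tsub_cancel_right _ _)

theorem card_filter_le_parts_and_sub (B : Multiset ℕ) (hB : ∀ b ∈ B, 0 < b)
    (hBn : B.sum ≤ n) (Q : Multiset ℕ → Prop) :
    #{p : n.Partition | B ≤ p.parts ∧ Q (p.parts - B)} =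
      #{μ : (n - B.sum).Partition | Q μ.parts} := by
  rw [← Fintype.card_subtype, ← Fintype.card_subtype]
  exact Fintype.card_congr ((Equiv.subtypeSubtypeEquivSubtypeInter _ _).symm.trans
    ((partitionWithPartsEquiv B hB hBn).subtypeEquiv fun _ => Iff.rfl))

theorem card_isRestricted_eq_card_isRegular {r : ℕ} (hr : 0 < r) (k : ℕ) :
    #{μ : k.Partition | IsRestricted r μ} = #{μ : k.Partition | IsRegular r μ} := by
  have hD :
      ({μ | IsRestricted r μ} : Finset k.Partition) = Nat.Partition.countRestricted k r := by
    ext μ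
    rw [Nat.Partition.countRestricted, mem_filter, mem_filter]
    simp only [mem_univ, true_and, IsRestricted]
    refine ⟨fun h i _ => by have := h i; omega, fun h s => ?_⟩
    by_cases hs : s ∈ μ.parts
    · have := h s hs; omega
    · simp [Multiset.count_eq_zero_of_notMem hs]
  have hO :
      ({μ | IsRegular r μ} : Finset k.Partition) = Nat.Partition.restricted k (¬ r ∣ ·) := by
    ext μ
    rw [Nat.Partition.restricted, mem_filter, mem_filter]
    rfl
  rw [hD, hO, Nat.Partition.card_restricted_eq_card_countRestricted k hr]

theorem replicate_le_and_restricted_sub_iff {r q u : ℕ} {M : Multiset ℕ} (hr : 0 < r) :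
    (Multiset.replicate (q * r) u ≤ M ∧
        ∀ s, (M - Multiset.replicate (q * r) u).count s ≤ r - 1) ↔
      (∀ s ≠ u, M.count s < r) ∧ M.count u / r = q := by
  simp only [← Multiset.le_count_iff_replicate_le, Multiset.count_sub, Multiset.count_replicate]
  constructor
  · rintro ⟨hle, h⟩
    refine ⟨fun s hs => ?_, Nat.div_eq_of_lt_le hle ?_⟩
    · have := h s; rw [if_neg (Ne.symm hs)] at this; omega
    · have := h u; rw [if_pos rfl] at this; rw [add_mul]; omega
  · rintro ⟨hlt, rfl⟩
    refine ⟨Nat.div_mul_le_self _ _, fun s => ?_⟩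
    split_ifs with hs
    · subst hs
      have := Nat.div_add_mod' (M.count u) r
      have := Nat.mod_lt (M.count u) hr
      omega
    · have := hlt s (Ne.symm hs); omega

theorem replicate_le_and_regular_sub_iff {r m s : ℕ} {M : Multiset ℕ} (hs : r ∣ s) :
    (Multiset.replicate m s ≤ M ∧ ∀ x ∈ M - Multiset.replicate m s, ¬ r ∣ x) ↔
      (∀ x ∈ M, r ∣ x → x = s) ∧ M.count s = m := by
  simp only [← Multiset.le_count_iff_replicate_le, ← Multiset.count_pos (s := M - _),
    Multiset.count_sub, Multiset.count_replicate]
  constructor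
  · rintro ⟨hle, h⟩
    refine ⟨fun x hx hrx => by_contra fun hne => h x ?_ hrx, ?_⟩
    · rw [if_neg (Ne.symm hne)]; exact Multiset.count_pos.2 hx
    · by_contra hne
      have := h s (by rw [if_pos rfl]; omega)
      exact this hs
  · rintro ⟨huniq, rfl⟩
    refine ⟨le_rfl, fun x hx hrx => ?_⟩
    split_ifs at hx with hxs
    · subst hxs; omega
    · exact hxs (huniq x (Multiset.count_pos.1 hx) hrx).symm

def weightedPairs (r n : ℕ) : Finset (ℕ × ℕ) :=
  {x ∈ Icc 1 n ×ˢ Icc 1 n | r * x.1 * x.2 ≤ n}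

theorem mem_weightedPairs {r : ℕ} (hr : 0 < r) {x : ℕ × ℕ} :
    x ∈ weightedPairs r n ↔ 0 < x.1 ∧ 0 < x.2 ∧ r * x.1 * x.2 ≤ n := by
  simp only [weightedPairs, mem_filter, mem_product, mem_Icc]
  constructor
  · rintro ⟨⟨⟨h1, -⟩, h2, -⟩, h⟩
    exact ⟨h1, h2, h⟩
  · rintro ⟨h1, h2, h⟩
    have : x.1 ≤ r * x.1 := Nat.le_mul_of_pos_left _ hr
    have : r * x.1 ≤ r * x.1 * x.2 := Nat.le_mul_of_pos_right _ h2
    have : x.2 ≤ r * x.1 * x.2 := Nat.le_mul_of_pos_left _ (Nat.mul_pos hr h1)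
    exact ⟨⟨⟨h1, by omega⟩, h2, by omega⟩, h⟩

theorem isOneRestricted_iff {r : ℕ} (hr : 0 < r) (p : n.Partition) :
    IsOneRestricted r p ↔ ∃ u, r ≤ p.parts.count u ∧ ∀ s ≠ u, p.parts.count s < r := by
  simp only [IsOneRestricted, card_eq_one, eq_singleton_iff_unique_mem, mem_filter,
    Multiset.mem_toFinset]
  constructor
  · rintro ⟨u, ⟨-, hu⟩, huniq⟩
    refine ⟨u, hu, fun s hs => by_contra fun h => hs (huniq s ⟨?_, by omega⟩)⟩
    exact Multiset.count_pos.1 (by omega)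
  · rintro ⟨u, hu, hlt⟩
    exact ⟨u, ⟨Multiset.count_pos.1 (by omega), hu⟩,
      fun s ⟨_, hs⟩ => by_contra fun h => (hlt s h).not_ge hs⟩

theorem isOneRestricted_iff_exists_mem_weightedPairs {r : ℕ} (hr : 0 < r) (p : n.Partition) :
    IsOneRestricted r p ↔ ∃ x ∈ weightedPairs r n,
      (∀ s ≠ x.1, p.parts.count s < r) ∧ p.parts.count x.1 / r = x.2 := by
  rw [isOneRestricted_iff hr]
  constructor
  · rintro ⟨u, hu, hlt⟩
    refine ⟨(u, p.parts.count u / r), (mem_weightedPairs hr).2 ⟨?_, Nat.div_pos hu hr, ?_⟩,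
      hlt, rfl⟩
    · exact p.parts_pos (Multiset.count_pos.1 (hr.trans_le hu))
    · have := sum_le_of_le_parts (Multiset.le_count_iff_replicate_le.1
        (Nat.div_mul_le_self (p.parts.count u) r))
      rw [Multiset.sum_replicate, smul_eq_mul] at this
      linarith
  · rintro ⟨x, hx, hlt, hdiv⟩
    have := ((mem_weightedPairs hr).1 hx).2.1
    exact ⟨x.1, (Nat.div_pos_iff.1 (hdiv ▸ this)).2, hlt⟩

theorem card_isOneRestricted_eq_sum {r : ℕ} (hr : 0 < r) :
    #{p : n.Partition | IsOneRestricted r p} =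
      ∑ x ∈ weightedPairs r n, #{μ : (n - r * x.1 * x.2).Partition | IsRestricted r μ} := by
  rw [card_filter_eq_sum_card_filter _ _ _ (isOneRestricted_iff_exists_mem_weightedPairs hr)]
  · refine sum_congr rfl fun x hx => ?_
    obtain ⟨hu, -, hn⟩ := (mem_weightedPairs hr).1 hx
    have hsum : (Multiset.replicate (x.2 * r) x.1).sum = r * x.1 * x.2 := by
      rw [Multiset.sum_replicate, smul_eq_mul]; ring
    rw [← hsum]
    refine Eq.trans (congrArg card ?_) (card_filter_le_parts_and_sub _
      (fun b hb => Multiset.eq_of_mem_replicate hb ▸ hu) (hsum ▸ hn)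
      (fun M => ∀ s, M.count s ≤ r - 1))
    ext p
    simp only [mem_filter, mem_univ, true_and]
    exact (replicate_le_and_restricted_sub_iff hr).symm
  · rintro p x hx y - ⟨-, hx2⟩ ⟨hylt, hy2⟩
    have hx1 : x.1 = y.1 := by
      by_contra hne
      have := Nat.div_pos_iff.1 (hx2 ▸ ((mem_weightedPairs hr).1 hx).2.1)
      exact (hylt x.1 hne).not_ge this.2
    exact Prod.ext hx1 (hx2.symm.trans (hx1 ▸ hy2))

theorem isOneRegular_iff {r : ℕ} (p : n.Partition) :
    IsOneRegular r p ↔ ∃ s ∈ p.parts, r ∣ s ∧ ∀ x ∈ p.parts, r ∣ x → x = s := by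
  simp only [IsOneRegular, card_eq_one, eq_singleton_iff_unique_mem, mem_filter,
    Multiset.mem_toFinset]
  exact ⟨fun ⟨s, ⟨hs, hrs⟩, h⟩ => ⟨s, hs, hrs, fun x hx hrx => h x ⟨hx, hrx⟩⟩,
    fun ⟨s, hs, hrs, h⟩ => ⟨s, ⟨hs, hrs⟩, fun x ⟨hx, hrx⟩ => h x hx hrx⟩⟩

theorem isOneRegular_iff_exists_mem_weightedPairs {r : ℕ} (hr : 0 < r) (p : n.Partition) :
    IsOneRegular r p ↔ ∃ x ∈ weightedPairs r n,
      (∀ y ∈ p.parts, r ∣ y → y = r * x.1) ∧ p.parts.count (r * x.1) = x.2 := by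
  rw [isOneRegular_iff]
  constructor
  · rintro ⟨_, hs, ⟨t, rfl⟩, huniq⟩
    refine ⟨(t, p.parts.count (r * t)),
      (mem_weightedPairs hr).2 ⟨?_, Multiset.count_pos.2 hs, ?_⟩, huniq, rfl⟩
    · exact Nat.pos_of_mul_pos_left (p.parts_pos hs)
    · have := sum_le_of_le_parts (Multiset.le_count_iff_replicate_le.1
        (le_refl (p.parts.count (r * t))))
      rw [Multiset.sum_replicate, smul_eq_mul] at this
      linarith
  · rintro ⟨x, hx, huniq, hcount⟩
    have := ((mem_weightedPairs hr).1 hx).2.1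
    exact ⟨r * x.1, Multiset.count_pos.1 (hcount ▸ this), dvd_mul_right r x.1, huniq⟩

theorem card_isOneRegular_eq_sum {r : ℕ} (hr : 0 < r) :
    #{p : n.Partition | IsOneRegular r p} =
      ∑ x ∈ weightedPairs r n, #{μ : (n - r * x.1 * x.2).Partition | IsRegular r μ} := by
  rw [card_filter_eq_sum_card_filter _ _ _ (isOneRegular_iff_exists_mem_weightedPairs hr)]
  · refine sum_congr rfl fun x hx => ?_
    obtain ⟨ht, -, hn⟩ := (mem_weightedPairs hr).1 hx
    have hsum : (Multiset.replicate x.2 (r * x.1)).sum = r * x.1 * x.2 := by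
      rw [Multiset.sum_replicate, smul_eq_mul]; ring
    rw [← hsum]
    refine Eq.trans (congrArg card ?_) (card_filter_le_parts_and_sub _
      (fun b hb => Multiset.eq_of_mem_replicate hb ▸ Nat.mul_pos hr ht) (hsum ▸ hn)
      (fun M => ∀ y ∈ M, ¬ r ∣ y))
    ext p
    simp only [mem_filter, mem_univ, true_and]
    exact (replicate_le_and_regular_sub_iff (dvd_mul_right r x.1)).symm
  · rintro p x hx y - ⟨-, hx2⟩ ⟨hyu, hy2⟩
    have hmem := Multiset.count_pos.1 (hx2 ▸ ((mem_weightedPairs hr).1 hx).2.1)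
    have hx1 : x.1 = y.1 := Nat.eq_of_mul_eq_mul_left hr (hyu _ hmem (dvd_mul_right r x.1))
    exact Prod.ext hx1 (hx2.symm.trans (hx1 ▸ hy2))

end

theorem oneRestricted_eq_oneRegular (n r : ℕ) (hr : 2 ≤ r) :
    (Finset.univ.filter (fun p : n.Partition => IsOneRestricted r p)).card = (Finset.univ.filter (fun p : n.Partition => IsOneRegular r p)).card := by
  have hr₀ : 0 < r := by omega
  rw [card_isOneRestricted_eq_sum hr₀, card_isOneRegular_eq_sum hr₀]
  exact sum_congr rfl fun x _ => card_isRestricted_eq_card_isRegular hr₀ _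

end BeckPaper
end

section
/- Let n ≥ 0 and r ≥ 2 be integers. Then the number of pairs (μ, j) with j ≥ 1 an integer and μ an r-flat partition of n − j satisfying μ_j − μ_{j+1} = r−1 equals the number of pairs (ν, j) with j ≥ 1 an integer and ν an r-flat partition of n − rj satisfying ν_j = ν_{j+1} (in both cases parts beyond the length of the partition are taken to be 0): #{(μ, j) : j ≥ 1, μ ∈ F_r(n − j), μ_j − μ_{j+1} = r−1} = #{(ν, j) : j ≥ 1, ν ∈ F_r(n − rj), ν_j = ν_{j+1}}. -/
open scoped Classical

namespace BeckPaper

/-!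
Subtracting `r - 1` from each of the first `j` parts of `μ` is a bijection between the two sets
of pairs. Since `μ_i ≥ μ_j ≥ r - 1` for `i ≤ j`, the size drops by `(r - 1) j`; the differences
`μ_i - μ_{i+1}` with `i ≠ j` are unchanged, and `μ_j - μ_{j+1} = r - 1` becomes `ν_j = ν_{j+1}`,
so `r`-flatness is preserved. Adding `r - 1` to the first `j` parts of `ν` (padded with zeros)
undoes it.
-/

lemma getD_filter_ne_zero {l : List ℕ} (hl : l.Pairwise (· ≥ ·)) (i : ℕ) :
    (l.filter (· ≠ 0)).getD i 0 = l.getD i 0 := by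
  induction l generalizing i with
  | nil => rfl
  | cons a l ih =>
    by_cases ha : a = 0
    · -- a sorted list headed by `0` consists of zeros only
      have hzero : ∀ x ∈ a :: l, x = 0 := by
        simpa [ha] using fun x hx => Nat.le_zero.mp (ha ▸ List.rel_of_pairwise_cons hl hx)
      rw [List.eq_replicate_iff.mpr ⟨rfl, hzero⟩]
      simp
    · cases i with
      | zero => simp [ha]
      | succ i => simpa [List.filter_cons, ha] using ih hl.of_cons i

lemma eq_of_getD_eq {l₁ l₂ : List ℕ} (h₁ : 0 ∉ l₁) (h₂ : 0 ∉ l₂)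
    (h : ∀ i, l₁.getD i 0 = l₂.getD i 0) : l₁ = l₂ := by
  have getD_ne_zero {l : List ℕ} (hl : 0 ∉ l) {i : ℕ} (hi : i < l.length) :
      l.getD i 0 ≠ 0 := by
    rw [List.getD_eq_getElem _ _ hi]
    exact fun h0 => hl (h0 ▸ List.getElem_mem hi)
  have hlen : l₁.length = l₂.length := by
    by_contra hne
    rcases Nat.lt_or_gt_of_ne hne with hlt | hlt
    · exact getD_ne_zero h₂ hlt (by rw [← h, List.getD_eq_default _ _ le_rfl])
    · exact getD_ne_zero h₁ hlt (by rw [h, List.getD_eq_default _ _ le_rfl])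
  refine List.ext_getElem hlen fun i hi₁ hi₂ => ?_
  simpa only [List.getD_eq_getElem _ _ hi₁, List.getD_eq_getElem _ _ hi₂] using h i

def partSeq {n : ℕ} (p : n.Partition) (i : ℕ) : ℕ := part p (i + 1)

section partSeq

variable {n : ℕ} (p : n.Partition)

lemma length_partsList : (partsList p).length = numParts p := Multiset.length_sort _

lemma zero_not_mem_partsList : 0 ∉ partsList p := fun h =>
  (p.parts_pos ((Multiset.mem_sort _).mp h)).ne' rfl

lemma partSeq_antitone : Antitone (partSeq p) := by
  intro i k hik
  show (partsList p).getD k 0 ≤ (partsList p).getD i 0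
  by_cases hk : k < (partsList p).length
  · rw [List.getD_eq_getElem _ _ hk, List.getD_eq_getElem _ _ (hik.trans_lt hk)]
    rcases hik.lt_or_eq with hlt | rfl
    · exact List.pairwise_iff_getElem.mp (Multiset.pairwise_sort _ _) i k _ hk hlt
    · rfl
  · rw [List.getD_eq_default _ _ (not_lt.mp hk)]
    exact Nat.zero_le _

lemma partSeq_eq_zero {i : ℕ} (hi : numParts p ≤ i) : partSeq p i = 0 :=
  List.getD_eq_default _ _ (by rwa [length_partsList])

lemma lt_numParts_of_partSeq_ne_zero {i : ℕ} (hi : partSeq p i ≠ 0) : i < numParts p :=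
  lt_of_not_ge fun h => hi (partSeq_eq_zero p h)

lemma isFlat_iff {r : ℕ} : IsFlat r p ↔ ∀ i, partSeq p i - partSeq p (i + 1) ≤ r - 1 := by
  constructor
  · intro h i
    by_cases hi : i < numParts p
    · exact h (i + 1) (Nat.le_add_left 1 i) hi
    · simp [partSeq_eq_zero p (not_lt.mp hi)]
  · rintro h (_ | i) h0 -
    · omega
    · exact h i

end partSeq

lemma parts_eq_of_partSeq_eq {m m' : ℕ} {p : m.Partition} {q : m'.Partition}
    (h : partSeq p = partSeq q) : p.parts = q.parts := by
  have hlist : partsList p = partsList q :=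
    eq_of_getD_eq (zero_not_mem_partsList p) (zero_not_mem_partsList q) (congrFun h)
  rw [← Multiset.sort_eq p.parts (· ≥ ·), ← Multiset.sort_eq q.parts (· ≥ ·)]
  exact congrArg _ hlist

/-- The partition whose parts are the nonzero values among `g 0, …, g (N - 1)`. -/
def ofSeq (N : ℕ) (g : ℕ → ℕ) : (∑ i ∈ Finset.range N, g i).Partition :=
  Nat.Partition.ofMultiset ((Multiset.range N).map g)

lemma partSeq_ofSeq {N : ℕ} {g : ℕ → ℕ} (hg : Antitone g)
    (hN : ∀ i, N ≤ i → g i = 0) :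
    partSeq (ofSeq N g) = g := by
  have hsorted : ((List.range N).map g).Pairwise (· ≥ ·) :=
    List.pairwise_map.mpr ((List.pairwise_lt_range).imp fun h => hg h.le)
  have hlist : partsList (ofSeq N g) = ((List.range N).map g).filter (· ≠ 0) := by
    rw [partsList, ofSeq, Nat.Partition.ofMultiset, Nat.Partition.ofSums]
    show Multiset.sort (Multiset.filter (· ≠ 0) (Multiset.map g (Multiset.range N))) _ = _
    rw [Multiset.range, Multiset.map_coe, Multiset.filter_coe, Multiset.coe_sort,
      List.mergeSort_eq_self _ (hsorted.filter _)]
  funext i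
  rw [partSeq, part, Nat.add_sub_cancel, hlist, getD_filter_ne_zero hsorted]
  by_cases hi : i < N
  · simp [hi]
  · rw [List.getD_eq_default _ _ (by simpa using hi), hN i (not_lt.mp hi)]

lemma sum_partSeq {n N : ℕ} {p : n.Partition} (hN : numParts p ≤ N) :
    ∑ i ∈ Finset.range N, partSeq p i = n := by
  have hparts := parts_eq_of_partSeq_eq (partSeq_ofSeq (partSeq_antitone p)
    fun i hi => partSeq_eq_zero p (hN.trans hi))
  rw [← (ofSeq N (partSeq p)).parts_sum, hparts, p.parts_sum]

def lowerSeq (c j : ℕ) (a : ℕ → ℕ) (i : ℕ) : ℕ := if i < j then a i - c else a i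

def raiseSeq (c j : ℕ) (a : ℕ → ℕ) (i : ℕ) : ℕ := if i < j then a i + c else a i

section shift

variable {a : ℕ → ℕ} {c j : ℕ}

lemma raiseSeq_antitone (ha : Antitone a) : Antitone (raiseSeq c j a) :=
  antitone_nat_of_succ_le fun i => by
    have := ha (Nat.le_add_right i 1)
    unfold raiseSeq
    split_ifs <;> omega

lemma lowerSeq_antitone (ha : Antitone a) (hj : a (j + 1) + c ≤ a j) :
    Antitone (lowerSeq c (j + 1) a) :=
  antitone_nat_of_succ_le fun i => by
    have := ha (Nat.le_add_right i 1)
    unfold lowerSeq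
    rcases eq_or_ne i j with rfl | hij <;> split_ifs <;> omega

lemma lowerSeq_raiseSeq : lowerSeq c j (raiseSeq c j a) = a := by
  funext i
  unfold lowerSeq raiseSeq
  split_ifs <;> simp

lemma raiseSeq_lowerSeq (h : ∀ i < j, c ≤ a i) : raiseSeq c j (lowerSeq c j a) = a := by
  funext i
  simp only [lowerSeq, raiseSeq]
  split_ifs with hi
  · have := h i hi
    omega
  · rfl

lemma sum_raiseSeq {N : ℕ} (hj : j ≤ N) :
    ∑ i ∈ Finset.range N, raiseSeq c j a i = ∑ i ∈ Finset.range N, a i + c * j := by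
  rw [← Finset.sum_range_add_sum_Ico _ hj, ← Finset.sum_range_add_sum_Ico _ hj]
  have hlow : ∑ i ∈ Finset.range j, raiseSeq c j a i = ∑ i ∈ Finset.range j, (a i + c) :=
    Finset.sum_congr rfl fun i hi => if_pos (Finset.mem_range.mp hi)
  have hhigh : ∑ i ∈ Finset.Ico j N, raiseSeq c j a i = ∑ i ∈ Finset.Ico j N, a i :=
    Finset.sum_congr rfl fun i hi => if_neg (Finset.mem_Ico.mp hi).1.not_gt
  rw [hlow, hhigh, Finset.sum_add_distrib, Finset.sum_const, Finset.card_range, smul_eq_mul]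
  ring

lemma sum_lowerSeq {N : ℕ} (hj : j ≤ N) (h : ∀ i < j, c ≤ a i) :
    ∑ i ∈ Finset.range N, lowerSeq c j a i + c * j = ∑ i ∈ Finset.range N, a i := by
  conv_rhs => rw [← raiseSeq_lowerSeq h]
  exact (sum_raiseSeq hj).symm

lemma lowerSeq_sub_succ_le (hflat : ∀ i, a i - a (i + 1) ≤ c) (hj : a j = a (j + 1) + c)
    (i : ℕ) : lowerSeq c (j + 1) a i - lowerSeq c (j + 1) a (i + 1) ≤ c := by
  have := hflat i
  unfold lowerSeq
  rcases eq_or_ne i j with rfl | hij <;> split_ifs <;> omega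

lemma raiseSeq_sub_succ_le (hflat : ∀ i, a i - a (i + 1) ≤ c) (hj : a j = a (j + 1))
    (i : ℕ) : raiseSeq c (j + 1) a i - raiseSeq c (j + 1) a (i + 1) ≤ c := by
  have := hflat i
  unfold raiseSeq
  rcases eq_or_ne i j with rfl | hij <;> split_ifs <;> omega

end shift

def lowerPart (c j : ℕ) {m : ℕ} (p : m.Partition) :
    (∑ i ∈ Finset.range (numParts p), lowerSeq c j (partSeq p) i).Partition :=
  ofSeq (numParts p) (lowerSeq c j (partSeq p))

def raisePart (c j : ℕ) {m : ℕ} (p : m.Partition) :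
    (∑ i ∈ Finset.range (j + numParts p), raiseSeq c j (partSeq p) i).Partition :=
  ofSeq (j + numParts p) (raiseSeq c j (partSeq p))

section shiftPart

variable {c j m : ℕ} (p : m.Partition)

lemma partSeq_lowerPart (h : Antitone (lowerSeq c j (partSeq p))) :
    partSeq (lowerPart c j p) = lowerSeq c j (partSeq p) :=
  partSeq_ofSeq h fun i hi => by
    unfold lowerSeq
    rw [partSeq_eq_zero p hi, Nat.zero_sub, ite_self]

lemma partSeq_raisePart : partSeq (raisePart c j p) = raiseSeq c j (partSeq p) :=
  partSeq_ofSeq (raiseSeq_antitone (partSeq_antitone p)) fun i hi => by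
    rw [raiseSeq, if_neg (by omega), partSeq_eq_zero p (by omega)]

end shiftPart

lemma le_partSeq_of_sub_eq {c k m : ℕ} {p : m.Partition}
    (hstep : partSeq p k - partSeq p (k + 1) = c) {i : ℕ} (hi : i ≤ k) :
    c ≤ partSeq p i :=
  le_trans (by omega) (partSeq_antitone p hi)

lemma partSeq_lowerPart_of_sub_eq {c k m : ℕ} {p : m.Partition}
    (hstep : partSeq p k - partSeq p (k + 1) = c) :
    partSeq (lowerPart c (k + 1) p) = lowerSeq c (k + 1) (partSeq p) := by
  have := partSeq_antitone p (Nat.le_add_right k 1)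
  exact partSeq_lowerPart p (lowerSeq_antitone (partSeq_antitone p) (by omega))

def lowerPair (c : ℕ) (x : Σ m : ℕ, m.Partition × ℕ) : Σ m : ℕ, m.Partition × ℕ :=
  ⟨_, lowerPart c x.2.2 x.2.1, x.2.2⟩

def raisePair (c : ℕ) (x : Σ m : ℕ, m.Partition × ℕ) : Σ m : ℕ, m.Partition × ℕ :=
  ⟨_, raisePart c x.2.2 x.2.1, x.2.2⟩

lemma sigma_eq_of_partSeq_eq {x y : Σ m : ℕ, m.Partition × ℕ}
    (hp : partSeq x.2.1 = partSeq y.2.1) (hj : x.2.2 = y.2.2) : x = y := by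
  obtain ⟨m, p, j⟩ := x
  obtain ⟨m', q, j'⟩ := y
  have hparts : p.parts = q.parts := parts_eq_of_partSeq_eq hp
  obtain rfl : m = m' := by rw [← p.parts_sum, ← q.parts_sum, hparts]
  obtain rfl : p = q := Nat.Partition.ext hparts
  obtain rfl : j = j' := hj
  rfl

lemma lowerPair_raisePair (c : ℕ) (x : Σ m : ℕ, m.Partition × ℕ) :
    lowerPair c (raisePair c x) = x := by
  refine sigma_eq_of_partSeq_eq ?_ rfl
  show partSeq (lowerPart c x.2.2 (raisePart c x.2.2 x.2.1)) = partSeq x.2.1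
  have hanti : Antitone (lowerSeq c x.2.2 (partSeq (raisePart c x.2.2 x.2.1))) := by
    rw [partSeq_raisePart, lowerSeq_raiseSeq]
    exact partSeq_antitone _
  rw [partSeq_lowerPart _ hanti, partSeq_raisePart, lowerSeq_raiseSeq]

def IsPairA (n r : ℕ) (x : Σ m : ℕ, m.Partition × ℕ) : Prop :=
  IsFlat r x.2.1 ∧ 1 ≤ x.2.2 ∧ x.1 + x.2.2 = n ∧
    part x.2.1 x.2.2 - part x.2.1 (x.2.2 + 1) = r - 1

def IsPairB (n r : ℕ) (x : Σ m : ℕ, m.Partition × ℕ) : Prop :=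
  IsFlat r x.2.1 ∧ 1 ≤ x.2.2 ∧ x.1 + r * x.2.2 = n ∧
    part x.2.1 x.2.2 = part x.2.1 (x.2.2 + 1)

section pairs

variable {n r m k : ℕ} {p : m.Partition}

lemma isPairA_succ_iff : IsPairA n r ⟨m, p, k + 1⟩ ↔
    (∀ i, partSeq p i - partSeq p (i + 1) ≤ r - 1) ∧ m + (k + 1) = n ∧
      partSeq p k - partSeq p (k + 1) = r - 1 := by
  simp only [IsPairA, isFlat_iff, le_add_iff_nonneg_left, zero_le, true_and]
  rfl

lemma isPairB_succ_iff : IsPairB n r ⟨m, p, k + 1⟩ ↔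
    (∀ i, partSeq p i - partSeq p (i + 1) ≤ r - 1) ∧ m + r * (k + 1) = n ∧
      partSeq p k = partSeq p (k + 1) := by
  simp only [IsPairB, isFlat_iff, le_add_iff_nonneg_left, zero_le, true_and]
  rfl

lemma isPairB_lowerPair (hr : 2 ≤ r) {x : Σ m : ℕ, m.Partition × ℕ} (hx : IsPairA n r x) :
    IsPairB n r (lowerPair (r - 1) x) := by
  obtain ⟨m, p, _ | k⟩ := x
  · exact absurd hx.2.1 (by norm_num)
  obtain ⟨hflat, hsum, hstep⟩ := isPairA_succ_iff.mp hx
  have hseq := partSeq_lowerPart_of_sub_eq hstep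
  have hk : k + 1 ≤ numParts p := lt_numParts_of_partSeq_ne_zero p (by omega)
  have hsum' := sum_lowerSeq (a := partSeq p) hk fun i hi =>
    le_partSeq_of_sub_eq hstep (Nat.le_of_lt_succ hi)
  rw [sum_partSeq le_rfl] at hsum'
  have hr' : r * (k + 1) = (r - 1) * (k + 1) + (k + 1) := by
    rw [← Nat.succ_mul, Nat.succ_eq_add_one, Nat.sub_add_cancel (by omega)]
  refine isPairB_succ_iff.mpr ⟨?_, ?_, ?_⟩
  · rw [hseq]
    exact lowerSeq_sub_succ_le hflat (by omega)
  · dsimp only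
    omega
  · rw [hseq]
    simp only [lowerSeq, if_pos k.lt_succ_self, if_neg (lt_irrefl _)]
    omega

lemma isPairA_raisePair (hr : 0 < r) {x : Σ m : ℕ, m.Partition × ℕ} (hx : IsPairB n r x) :
    IsPairA n r (raisePair (r - 1) x) := by
  obtain ⟨m, p, _ | k⟩ := x
  · exact absurd hx.2.1 (by norm_num)
  obtain ⟨hflat, hsum, hstep⟩ := isPairB_succ_iff.mp hx
  have hseq := partSeq_raisePart (c := r - 1) (j := k + 1) p
  have hsum' := sum_raiseSeq (c := r - 1) (a := partSeq p) (Nat.le_add_right (k + 1) (numParts p))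
  rw [sum_partSeq (Nat.le_add_left _ _)] at hsum'
  have hr' : r * (k + 1) = (r - 1) * (k + 1) + (k + 1) := by
    rw [← Nat.succ_mul, Nat.succ_eq_add_one, Nat.sub_add_cancel hr]
  refine isPairA_succ_iff.mpr ⟨?_, ?_, ?_⟩
  · rw [hseq]
    exact raiseSeq_sub_succ_le hflat hstep
  · dsimp only
    omega
  · rw [hseq]
    simp only [raiseSeq, if_pos k.lt_succ_self, if_neg (lt_irrefl _)]
    omega

lemma raisePair_lowerPair {x : Σ m : ℕ, m.Partition × ℕ} (hx : IsPairA n r x) :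
    raisePair (r - 1) (lowerPair (r - 1) x) = x := by
  obtain ⟨m, p, _ | k⟩ := x
  · exact absurd hx.2.1 (by norm_num)
  obtain ⟨-, -, hstep⟩ := isPairA_succ_iff.mp hx
  refine sigma_eq_of_partSeq_eq ?_ rfl
  show partSeq (raisePart (r - 1) (k + 1) (lowerPart (r - 1) (k + 1) p)) = partSeq p
  rw [partSeq_raisePart, partSeq_lowerPart_of_sub_eq hstep, raiseSeq_lowerSeq]
  exact fun i hi => le_partSeq_of_sub_eq hstep (Nat.le_of_lt_succ hi)

end pairs

theorem pairs_A_eq_pairs_B (n r : ℕ) (hr : 2 ≤ r) :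
    Nat.card {x : Σ m : ℕ, m.Partition × ℕ //
        IsFlat r x.2.1 ∧ 1 ≤ x.2.2 ∧ x.1 + x.2.2 = n ∧
          part x.2.1 x.2.2 - part x.2.1 (x.2.2 + 1) = r - 1} =
      Nat.card {x : Σ m : ℕ, m.Partition × ℕ //
        IsFlat r x.2.1 ∧ 1 ≤ x.2.2 ∧ x.1 + r * x.2.2 = n ∧
          part x.2.1 x.2.2 = part x.2.1 (x.2.2 + 1)} :=
  Nat.card_congr
    { toFun := fun x => ⟨lowerPair (r - 1) x, isPairB_lowerPair hr x.2⟩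
      invFun := fun y => ⟨raisePair (r - 1) y, isPairA_raisePair (by omega) y.2⟩
      left_inv := fun x => Subtype.ext (raisePair_lowerPair x.2)
      right_inv := fun y => Subtype.ext (lowerPair_raisePair _ _) }

end BeckPaper
end
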